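/- For w₁ ≠ w₂ in the closed unit disk 𝔹 ⊆ ℝ², let δ(w₁,w₂) = 1 − |‖w₂‖² − ‖w₁‖²| / (2‖w₂ − w₁‖); this is the height of the circular segment among the two Voronoi cells H₁(w₁,w₂), H₂(w₁,w₂) of 𝔹. Then there exists a universal constant C > 0 such that for every λ ∈ (0, 10⁻⁴], vol{(w₁,w₂) ∈ 𝔹 × 𝔹 : w₁ ≠ w₂ and δ(w₁,w₂)⁴ ≤ λ} ≤ C·λ^{7/8}. -/

import Mathlib

/-!
If `δ(w₁, w₂) ≤ ε`, write `r = ‖w₁‖`, `ρ = ‖w₂‖`, `d = ‖w₂ - w₁‖`. Then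
`2d(1 - ε) ≤ |ρ² - r²| = |ρ - r|(ρ + r)`, and `|ρ - r| ≤ d`, `ρ + r ≤ 2` force both points into the
annulus `1 - 2ε ≤ ‖·‖ ≤ 1` and make the chord almost radial: `(1 - ε)d ≤ |ρ - r|` and `d ≤ 5ε/2`.
By Heron's formula the distance of `w₂` from the line `ℝ w₁` is then `O(ε^{3/2})`, so for fixed `w₁`
the point `w₂` lies in a rectangle of area `O(ε^{5/2})`, while `w₁` ranges over an annulus of area
`O(ε)`. Fubini gives `O(ε^{7/2})`, and `ε = λ^{1/4}` gives the bound `O(λ^{7/8})`.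
-/

open MeasureTheory

noncomputable section

/-- Points of the plane (with the Euclidean norm). -/
abbrev Pt : Type := EuclideanSpace ℝ (Fin 2)

/-- The closed unit disk in the plane. -/
def unitDisk : Set Pt := Metric.closedBall 0 1

/-- The height `δ(w₁,w₂) = 1 − |‖w₂‖² − ‖w₁‖²| / (2‖w₂ − w₁‖)` of the circular segment
among the two Voronoi cells of `w₁ ≠ w₂` in the closed unit disk. -/
def segHeight (w₁ w₂ : Pt) : ℝ := 1 - |‖w₂‖ ^ 2 - ‖w₁‖ ^ 2| / (2 * ‖w₂ - w₁‖)

open Module Set Metric ENNReal Real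

theorem MeasureTheory.Measure.prod_le_mul_of_forall_slice_le {α β : Type*} [MeasurableSpace α]
    [MeasurableSpace β] {μ : Measure α} {ν : Measure β} [SFinite ν] {s : Set (α × β)}
    (hs : MeasurableSet s) {A : Set α} {K : ℝ≥0∞} (hsA : ∀ p ∈ s, p.1 ∈ A)
    (hK : ∀ x ∈ A, ν (Prod.mk x ⁻¹' s) ≤ K) :
    μ.prod ν s ≤ K * μ A := by
  have hslice (x : α) : ν (Prod.mk x ⁻¹' s) ≤ A.indicator (fun _ => K) x := by
    by_cases hx : x ∈ A
    · simpa [hx] using hK x hx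
    · have : Prod.mk x ⁻¹' s = ∅ := eq_empty_of_forall_notMem fun y hy => hx (hsA _ hy)
      simp [this]
  rw [Measure.prod_apply hs]
  exact (lintegral_mono hslice).trans (lintegral_indicator_const_le A K)

theorem volume_closedBall_diff_ball_fin_two (x : EuclideanSpace ℝ (Fin 2)) {r s : ℝ}
    (hs : 0 ≤ s) (hsr : s ≤ r) :
    volume (closedBall x r \ ball x s) = ENNReal.ofReal (π * (r ^ 2 - s ^ 2)) := by
  rw [measure_sdiff (ball_subset_closedBall.trans (closedBall_subset_closedBall hsr))
      measurableSet_ball.nullMeasurableSet measure_ball_lt_top.ne,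
    EuclideanSpace.volume_closedBall_fin_two, EuclideanSpace.volume_ball_fin_two,
    ← ENNReal.sub_mul fun _ _ => ofReal_ne_top, ← ofReal_pow (hs.trans hsr), ← ofReal_pow hs,
    ← ofReal_sub _ (by positivity), ← ofReal_mul (by nlinarith), mul_comm]

section InnerProductSpace

variable {E : Type*} [NormedAddCommGroup E] [InnerProductSpace ℝ E]

/-- For a unit vector `u`, the rectangle `[a, b] × [-h, h]` in coordinates along and across `u`. -/
def rectAlong (u : E) (a b h : ℝ) : Set E :=
  {v | inner ℝ v u ∈ Icc a b ∧ ‖v‖ ^ 2 - inner ℝ v u ^ 2 ≤ h ^ 2}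

theorem norm_sub_norm_sub_le_inner_inv_norm_smul (v w : E) :
    ‖w‖ - ‖v - w‖ ≤ inner ℝ v (‖w‖⁻¹ • w) := by
  rcases eq_or_ne w 0 with rfl | hw
  · simp
  have hu : ‖‖w‖⁻¹ • w‖ = 1 := norm_smul_inv_norm hw
  have hw_u : inner ℝ w (‖w‖⁻¹ • w) = ‖w‖ := by
    rw [real_inner_smul_right, real_inner_self_eq_norm_sq]
    field_simp
  have h := real_inner_le_norm (w - v) (‖w‖⁻¹ • w)
  rw [hu, mul_one, norm_sub_rev, inner_sub_left, hw_u] at h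
  linarith

/-- Heron's formula for the triangle `0, w, v`. -/
theorem four_mul_norm_sq_mul_sub_inner_sq_eq {w : E} (hw : w ≠ 0) (v : E) :
    4 * ‖w‖ ^ 2 * (‖v‖ ^ 2 - inner ℝ v (‖w‖⁻¹ • w) ^ 2) =
      (‖v - w‖ ^ 2 - (‖v‖ - ‖w‖) ^ 2) * ((‖v‖ + ‖w‖) ^ 2 - ‖v - w‖ ^ 2) := by
  have hw' : ‖w‖ ≠ 0 := norm_ne_zero_iff.mpr hw
  rw [real_inner_smul_right, norm_sub_sq_real]
  field_simp
  ring

theorem volume_rectAlong_le [FiniteDimensional ℝ E] [MeasurableSpace E] [BorelSpace E]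
    (hE : finrank ℝ E = 2) {u : E} (hu : ‖u‖ = 1) (a b : ℝ) {h : ℝ} (hh : 0 ≤ h) :
    volume (rectAlong u a b h) ≤ ENNReal.ofReal (b - a) * ENNReal.ofReal (2 * h) := by
  obtain ⟨e, he⟩ := Orthonormal.exists_orthonormalBasis_extension_of_card_eq
    (ι := Fin 2) (by simpa using hE) (v := fun _ => u) (s := {0})
    ⟨fun _ => hu, fun i j hij => (hij (Subsingleton.elim i j)).elim⟩
  have hrepr := (PiLp.volume_preserving_ofLp (Fin 2)).comp e.measurePreserving_repr
  set I : Fin 2 → Set ℝ := ![Icc a b, Icc (-h) h]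
  have hsub : rectAlong u a b h ⊆ (fun v => (e.repr v).ofLp) ⁻¹' univ.pi I := by
    rintro v ⟨hv, hv'⟩
    have h0 : e.repr v 0 = inner ℝ v u := by
      rw [e.repr_apply_apply, he 0 rfl, real_inner_comm]
    have hnorm : ‖v‖ ^ 2 = e.repr v 0 ^ 2 + e.repr v 1 ^ 2 := by
      rw [← e.repr.norm_map, EuclideanSpace.norm_sq_eq, Fin.sum_univ_two, Real.norm_eq_abs,
        Real.norm_eq_abs, sq_abs, sq_abs]
    simp only [mem_preimage, mem_univ_pi, Fin.forall_fin_two]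
    refine ⟨h0 ▸ hv, abs_le.mp (abs_le_of_sq_le_sq ?_ hh)⟩
    rw [hnorm, h0] at hv'
    linarith
  calc volume (rectAlong u a b h) ≤ volume (univ.pi I) :=
        (measure_mono hsub).trans (hrepr.measure_preimage_le _)
    _ = ENNReal.ofReal (b - a) * ENNReal.ofReal (2 * h) := by
        rw [volume_pi_pi, Fin.prod_univ_two]
        simp [I, Real.volume_Icc, two_mul]

end InnerProductSpace

section SegmentHeight

variable {w₁ w₂ : Pt} {ε : ℝ}

theorem norm_bounds_of_segHeight_le (h₁ : ‖w₁‖ ≤ 1) (h₂ : ‖w₂‖ ≤ 1) (hne : w₁ ≠ w₂)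
    (hε : ε ≤ 1 / 10) (hδ : segHeight w₁ w₂ ≤ ε) :
    1 - 2 * ε ≤ ‖w₁‖ ∧ (1 - ε) * ‖w₂ - w₁‖ ≤ |‖w₂‖ - ‖w₁‖| ∧ ‖w₂ - w₁‖ ≤ 5 / 2 * ε := by
  set r := ‖w₁‖
  set ρ := ‖w₂‖
  set d := ‖w₂ - w₁‖
  have hd : 0 < d := norm_pos_iff.mpr (sub_ne_zero.mpr hne.symm)
  have hρr : |ρ - r| ≤ d := abs_norm_sub_norm_le w₂ w₁
  have hsq : |ρ ^ 2 - r ^ 2| = |ρ - r| * (ρ + r) := by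
    rw [← abs_of_nonneg (by positivity : 0 ≤ ρ + r), ← abs_mul]
    ring_nf
  have hkey : 2 * d * (1 - ε) ≤ |ρ - r| * (ρ + r) := by
    have : 1 - ε ≤ |ρ ^ 2 - r ^ 2| / (2 * d) := by unfold segHeight at hδ; linarith
    rw [← hsq, mul_comm]
    exact (le_div_iff₀ (by positivity)).mp this
  have hsum : 2 * (1 - ε) ≤ ρ + r := by
    nlinarith [mul_le_mul_of_nonneg_right hρr (by positivity : 0 ≤ ρ + r)]
  have hdiff : (1 - ε) * d ≤ |ρ - r| := by
    nlinarith [mul_le_mul_of_nonneg_left (by linarith : ρ + r ≤ 2) (abs_nonneg (ρ - r))]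
  have hdiff' : |ρ - r| ≤ 2 * ε := abs_le.mpr ⟨by linarith, by linarith⟩
  exact ⟨by linarith, hdiff, by nlinarith⟩

theorem mem_rectAlong_of_segHeight_le (h₁ : ‖w₁‖ ≤ 1) (h₂ : ‖w₂‖ ≤ 1) (hne : w₁ ≠ w₂)
    (hε₀ : 0 ≤ ε) (hε : ε ≤ 1 / 10) (hδ : segHeight w₁ w₂ ≤ ε) :
    w₂ ∈ rectAlong (‖w₁‖⁻¹ • w₁) (1 - 5 * ε) 1 (5 * ε * √ε) := by
  obtain ⟨hr, hdiff, hd⟩ := norm_bounds_of_segHeight_le h₁ h₂ hne hε hδ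
  have hw₁ : w₁ ≠ 0 := norm_ne_zero_iff.mp (by linarith)
  have hheron := four_mul_norm_sq_mul_sub_inner_sq_eq hw₁ w₂
  have hu : ‖‖w₁‖⁻¹ • w₁‖ = 1 := norm_smul_inv_norm hw₁
  set u := ‖w₁‖⁻¹ • w₁
  set r := ‖w₁‖
  set ρ := ‖w₂‖
  set d := ‖w₂ - w₁‖
  refine ⟨⟨?_, ?_⟩, ?_⟩
  · linarith [norm_sub_norm_sub_le_inner_inv_norm_smul w₂ w₁]
  · calc inner ℝ w₂ u ≤ ρ * ‖u‖ := real_inner_le_norm w₂ u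
      _ ≤ 1 := by rw [hu, mul_one]; exact h₂
  · have hgap : d ^ 2 - (ρ - r) ^ 2 ≤ 25 / 2 * ε ^ 3 := by
      have : ((1 - ε) * d) ^ 2 ≤ (ρ - r) ^ 2 := by
        rw [← sq_abs (ρ - r)]
        exact pow_le_pow_left₀ (by nlinarith [norm_nonneg (w₂ - w₁)]) hdiff 2
      have hd2 : d ^ 2 ≤ (5 / 2 * ε) ^ 2 := pow_le_pow_left₀ (norm_nonneg _) hd 2
      nlinarith [mul_le_mul_of_nonneg_left hd2 (by positivity : 0 ≤ 2 * ε), sq_nonneg (ε * d)]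
    have hprod : (d ^ 2 - (ρ - r) ^ 2) * ((ρ + r) ^ 2 - d ^ 2) ≤ 25 / 2 * ε ^ 3 * 4 := by
      refine mul_le_mul hgap ?_ ?_ (by positivity)
      · nlinarith [norm_nonneg w₂]
      · nlinarith [norm_nonneg w₂, norm_nonneg (w₂ - w₁)]
    have hr2 : 1 / 2 ≤ r ^ 2 := by nlinarith
    rw [mul_pow, mul_pow, sq_sqrt hε₀]
    by_contra! hX
    have hX₀ : 0 ≤ ρ ^ 2 - inner ℝ w₂ u ^ 2 := by nlinarith
    nlinarith [mul_le_mul_of_nonneg_right hr2 hX₀]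

end SegmentHeight

theorem measurable_segHeight : Measurable fun p : Pt × Pt => segHeight p.1 p.2 := by
  unfold segHeight
  fun_prop

theorem volume_setOf_segHeight_le_le {ε : ℝ} (hε₀ : 0 < ε) (hε : ε ≤ 1 / 10) :
    volume {p : Pt × Pt | p.1 ∈ unitDisk ∧ p.2 ∈ unitDisk ∧ p.1 ≠ p.2 ∧ segHeight p.1 p.2 ≤ ε}
      ≤ ENNReal.ofReal (800 * ε ^ 3 * √ε) := by
  set S := {p : Pt × Pt | p.1 ∈ unitDisk ∧ p.2 ∈ unitDisk ∧ p.1 ≠ p.2 ∧ segHeight p.1 p.2 ≤ ε}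
  have hS : MeasurableSet S :=
    (measurableSet_closedBall.preimage measurable_fst).inter
      ((measurableSet_closedBall.preimage measurable_snd).inter
        ((measurableSet_eq_fun measurable_fst measurable_snd).compl.inter
          (measurableSet_le measurable_segHeight measurable_const)))
  set A : Set Pt := closedBall 0 1 \ ball 0 (1 - 2 * ε)
  have hSA : ∀ p ∈ S, p.1 ∈ A := by
    rintro ⟨w₁, w₂⟩ ⟨h₁, h₂, hne, hδ⟩
    have hr := (norm_bounds_of_segHeight_le (mem_closedBall_zero_iff.mp h₁)
      (mem_closedBall_zero_iff.mp h₂) hne hε hδ).1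
    exact ⟨h₁, fun h => (mem_ball_zero_iff.mp h).not_ge hr⟩
  have hslice : ∀ x ∈ A, volume (Prod.mk x ⁻¹' S) ≤
      ENNReal.ofReal (5 * ε) * ENNReal.ofReal (2 * (5 * ε * √ε)) := by
    intro x hx
    have hx₀ : x ≠ 0 := by
      rintro rfl
      exact hx.2 (mem_ball_self (by linarith))
    have hu : ‖‖x‖⁻¹ • x‖ = 1 := norm_smul_inv_norm hx₀
    calc volume (Prod.mk x ⁻¹' S)
        ≤ volume (rectAlong (‖x‖⁻¹ • x) (1 - 5 * ε) 1 (5 * ε * √ε)) :=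
          measure_mono fun y ⟨h₁, h₂, hne, hδ⟩ => mem_rectAlong_of_segHeight_le
            (mem_closedBall_zero_iff.mp h₁) (mem_closedBall_zero_iff.mp h₂) hne hε₀.le hε hδ
      _ ≤ ENNReal.ofReal (1 - (1 - 5 * ε)) * ENNReal.ofReal (2 * (5 * ε * √ε)) :=
          volume_rectAlong_le (by simp) hu _ _ (by positivity)
      _ = _ := by congr 2; ring
  calc volume S = volume.prod volume S := by rw [Measure.volume_eq_prod]
    _ ≤ ENNReal.ofReal (5 * ε) * ENNReal.ofReal (2 * (5 * ε * √ε)) * volume A :=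
      Measure.prod_le_mul_of_forall_slice_le hS hSA hslice
    _ ≤ ENNReal.ofReal (800 * ε ^ 3 * √ε) := by
      rw [volume_closedBall_diff_ball_fin_two 0 (by linarith) (by linarith),
        ← ofReal_mul (by positivity), ← ofReal_mul (by positivity)]
      refine ofReal_le_ofReal ?_
      calc 5 * ε * (2 * (5 * ε * √ε)) * (π * (1 ^ 2 - (1 - 2 * ε) ^ 2))
          = 200 * (π * (1 - ε)) * (ε ^ 3 * √ε) := by ring
        _ ≤ 200 * 4 * (ε ^ 3 * √ε) := by gcongr; nlinarith [pi_le_four, pi_pos]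
        _ = 800 * ε ^ 3 * √ε := by ring

/-- There is a universal constant `C > 0` such that for every
`λ ∈ (0, 10⁻⁴]`,
`vol {(w₁,w₂) ∈ 𝔹 × 𝔹 : w₁ ≠ w₂ and δ(w₁,w₂)⁴ ≤ λ} ≤ C·λ^{7/8}`. -/
theorem volume_small_segment_height_le :
    ∃ C : ℝ, 0 < C ∧ ∀ lam : ℝ, 0 < lam → lam ≤ 1 / 10 ^ 4 →
      volume {p : Pt × Pt | p.1 ∈ unitDisk ∧ p.2 ∈ unitDisk ∧ p.1 ≠ p.2 ∧
          segHeight p.1 p.2 ^ 4 ≤ lam}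
        ≤ ENNReal.ofReal (C * lam ^ ((7 : ℝ) / 8)) := by
  refine ⟨800, by norm_num, fun lam hlam hlam' => ?_⟩
  set ε := lam ^ ((1 : ℝ) / 4) with hε
  have hε₀ : 0 < ε := rpow_pos_of_pos hlam _
  have hε₄ : ε ^ 4 = lam := by
    rw [← Real.rpow_natCast, ← rpow_mul hlam.le]
    norm_num
  have hε₁ : ε ≤ 1 / 10 :=
    le_of_pow_le_pow_left₀ four_ne_zero (by norm_num) (by rw [hε₄]; linarith)
  have hpow : ε ^ 3 * √ε = lam ^ ((7 : ℝ) / 8) := by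
    rw [sqrt_eq_rpow, ← Real.rpow_natCast, ← rpow_add hε₀, hε, ← rpow_mul hlam.le]
    norm_num
  calc volume {p : Pt × Pt | p.1 ∈ unitDisk ∧ p.2 ∈ unitDisk ∧ p.1 ≠ p.2 ∧
          segHeight p.1 p.2 ^ 4 ≤ lam}
        ≤ volume {p : Pt × Pt | p.1 ∈ unitDisk ∧ p.2 ∈ unitDisk ∧ p.1 ≠ p.2 ∧
          segHeight p.1 p.2 ≤ ε} :=
        measure_mono fun _ ⟨h₁, h₂, hne, hδ⟩ ↦
          ⟨h₁, h₂, hne, le_of_pow_le_pow_left₀ four_ne_zero hε₀.le (hε₄ ▸ hδ)⟩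
    _ ≤ ENNReal.ofReal (800 * ε ^ 3 * √ε) := volume_setOf_segHeight_le_le hε₀ hε₁
    _ = _ := by rw [mul_assoc, hpow]

end
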